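/- arXiv:2412.03918 — 2 statements merged into one kernel-verified Lean document; each statement's English description precedes it below -/
import Mathlib

section
/- Let n, q be positive integers, X a real n×q matrix, W a real n×n symmetric positive definite matrix with XᵀWX invertible, φ > 0 a real number, z ∈ ℝⁿ, and x ∈ ℝⁿ, and set P := W^{1/2}·X·(XᵀWX)⁻¹·Xᵀ·W^{1/2}. Assume s := (I − P)·W^{1/2}·x ≠ 0. Define β̂ := (XᵀWX)⁻¹·Xᵀ·W·z, r := (I − P)·W^{1/2}·(z − X·β̂), and let u ∈ ℝ^{q+1} be the vector whose first q coordinates are (1/φ)·Xᵀ·W·(z − X·β̂) and whose last coordinate is (1/φ)·xᵀ·W·(z − X·β̂), and let M be the block matrix [[XᵀWX, XᵀWx], [xᵀWX, xᵀWx]]. Then (1/φ)·M is invertible and the score statistic uᵀ·((1/φ)·M)⁻¹·u equals ⟨r, s⟩² / (φ·‖s‖²). -/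
/-! By the normal equations `Xᵀ W (z − X β̂) = 0` the score vector vanishes outside its last
coordinate, so the statistic only sees the corner entry of `M⁻¹`, the reciprocal of the Schur
complement `xᵀWx − xᵀWX (XᵀWX)⁻¹ XᵀWx`. As `I − P` is a symmetric idempotent and
`W^{1/2} W^{1/2} = W`, the Gram form of `(I − P) W^{1/2}` is `W − WX (XᵀWX)⁻¹ XᵀW`; this
identifies the Schur complement with `‖s‖²` and the last score coordinate `xᵀW(z − Xβ̂)` with
`⟨r, s⟩`. -/

open Matrix
open scoped ComplexOrder

namespace Matrix

section SquareRoot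

variable {n 𝕜 : Type*} [Fintype n] [DecidableEq n] [RCLike 𝕜]

lemma IsHermitian.eigenvectorUnitary_mul_diagonal_mul_star {A : Matrix n n 𝕜}
    (hA : A.IsHermitian) (f : ℝ → ℝ) :
    (hA.eigenvectorUnitary : Matrix n n 𝕜) * diagonal (RCLike.ofReal ∘ f ∘ hA.eigenvalues) *
      (star hA.eigenvectorUnitary : Matrix n n 𝕜) = cfc f A := by
  rw [hA.cfc_eq, IsHermitian.cfc, Unitary.conjStarAlgAut_apply]

lemma PosSemidef.cfc_sqrt_mul_cfc_sqrt {A : Matrix n n 𝕜} (hA : A.PosSemidef) :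
    cfc Real.sqrt A * cfc Real.sqrt A = A := by
  have : IsSelfAdjoint A := hA.1
  calc cfc Real.sqrt A * cfc Real.sqrt A = cfc (fun x => √x * √x) A := (cfc_mul ..).symm
    _ = cfc id A := cfc_congr fun x hx => by
          obtain ⟨i, rfl⟩ := hA.1.spectrum_real_eq_range_eigenvalues ▸ hx
          exact Real.mul_self_sqrt (hA.eigenvalues_nonneg i)
    _ = A := cfc_id ℝ A

lemma transpose_cfc (A : Matrix n n ℝ) (f : ℝ → ℝ) : (cfc f A)ᵀ = cfc f A := by
  simpa [IsSelfAdjoint, star_eq_conjTranspose, conjTranspose_eq_transpose_of_trivial] using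
    (cfc_predicate f A : IsSelfAdjoint _)

end SquareRoot

section WeightedProjection

variable {n q R : Type*} [Fintype n] [Fintype q] [DecidableEq q] [CommRing R]
  {S W : Matrix n n R} {X : Matrix n q R}

noncomputable def weightedLeastSquares (X : Matrix n q R) (W : Matrix n n R) (z : n → R) :
    q → R :=
  (Xᵀ * W * X)⁻¹ *ᵥ (Xᵀ *ᵥ (W *ᵥ z))

lemma transpose_mulVec_mulVec_sub_weightedLeastSquares (hA : IsUnit (Xᵀ * W * X).det)
    (z : n → R) : Xᵀ *ᵥ (W *ᵥ (z - X *ᵥ weightedLeastSquares X W z)) = 0 := by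
  simp only [weightedLeastSquares, mulVec_sub, mulVec_mulVec, ← Matrix.mul_assoc]
  rw [mul_nonsing_inv _ hA, Matrix.one_mul, sub_self]

noncomputable def weightedHatMatrix (S : Matrix n n R) (X : Matrix n q R) (W : Matrix n n R) :
    Matrix n n R :=
  S * X * (Xᵀ * W * X)⁻¹ * Xᵀ * S

lemma transpose_weightedHatMatrix (hSt : Sᵀ = S) (hSS : S * S = W) :
    (weightedHatMatrix S X W)ᵀ = weightedHatMatrix S X W := by
  have hWt : Wᵀ = W := by rw [← hSS, transpose_mul, hSt]
  simp only [weightedHatMatrix, transpose_mul, transpose_transpose, hSt, transpose_nonsing_inv,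
    hWt, Matrix.mul_assoc]

lemma weightedHatMatrix_mul_self (hSS : S * S = W) (hA : IsUnit (Xᵀ * W * X).det) :
    weightedHatMatrix S X W * weightedHatMatrix S X W = weightedHatMatrix S X W := calc
  _ = S * X * ((Xᵀ * W * X)⁻¹ * (Xᵀ * (S * S) * X) * (Xᵀ * W * X)⁻¹) * Xᵀ * S := by
      simp only [weightedHatMatrix, Matrix.mul_assoc]
  _ = _ := by rw [hSS, nonsing_inv_mul _ hA, Matrix.one_mul]; rfl

variable [DecidableEq n]

lemma transpose_mul_self_one_sub_weightedHatMatrix_mul (hSt : Sᵀ = S) (hSS : S * S = W)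
    (hA : IsUnit (Xᵀ * W * X).det) :
    ((1 - weightedHatMatrix S X W) * S)ᵀ * ((1 - weightedHatMatrix S X W) * S) =
      W - W * X * (Xᵀ * W * X)⁻¹ * (Xᵀ * W) := by
  have hidem : (1 - weightedHatMatrix S X W) * (1 - weightedHatMatrix S X W) =
      1 - weightedHatMatrix S X W := by
    rw [sub_mul, mul_sub, mul_sub, weightedHatMatrix_mul_self hSS hA]; simp
  calc _ = S * ((1 - weightedHatMatrix S X W) * (1 - weightedHatMatrix S X W)) * S := by
        rw [transpose_mul, transpose_sub, transpose_one, transpose_weightedHatMatrix hSt hSS, hSt]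
        simp only [Matrix.mul_assoc]
    _ = (S * S) - (S * S) * X * (Xᵀ * W * X)⁻¹ * (Xᵀ * (S * S)) := by
        rw [hidem, mul_sub, sub_mul, weightedHatMatrix]
        simp only [Matrix.mul_assoc, Matrix.mul_one]
    _ = _ := by rw [hSS]

lemma dotProduct_one_sub_weightedHatMatrix_mulVec (hSt : Sᵀ = S) (hSS : S * S = W)
    (hA : IsUnit (Xᵀ * W * X).det) (a b : n → R) :
    ((1 - weightedHatMatrix S X W) *ᵥ (S *ᵥ a)) ⬝ᵥ ((1 - weightedHatMatrix S X W) *ᵥ (S *ᵥ b)) =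
      a ⬝ᵥ (W *ᵥ b) - (a ᵥ* (W * X)) ⬝ᵥ ((Xᵀ * W * X)⁻¹ *ᵥ (Xᵀ *ᵥ (W *ᵥ b))) := by
  rw [mulVec_mulVec, mulVec_mulVec, ← vecMul_transpose, ← dotProduct_mulVec, mulVec_mulVec,
    transpose_mul_self_one_sub_weightedHatMatrix_mul hSt hSS hA, sub_mulVec, dotProduct_sub,
    ← dotProduct_mulVec, mulVec_mulVec, mulVec_mulVec, mulVec_mulVec]
  simp only [Matrix.mul_assoc]

end WeightedProjection

section Bordered

variable {m K : Type*} [Fintype m] [Field K]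

def borderedMatrix (A : Matrix m m K) (b c : m → K) (d : K) : Matrix (m ⊕ Unit) (m ⊕ Unit) K :=
  fromBlocks A (replicateCol Unit b) (replicateRow Unit c) (of fun _ _ => d)

variable {A : Matrix m m K} {b c : m → K} {d : K}

lemma borderedMatrix_mulVec (v : m → K) (t : K) :
    borderedMatrix A b c d *ᵥ Sum.elim v (fun _ => t) =
      Sum.elim (A *ᵥ v + t • b) (fun _ => c ⬝ᵥ v + d * t) := by
  rw [borderedMatrix, fromBlocks_mulVec]
  congr 1
  · ext i; simp [mulVec, dotProduct, mul_comm]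
  · ext; simp [mulVec, dotProduct, replicateRow]

variable [DecidableEq m]

lemma smul_dotProduct_inv_smul_mulVec_smul {M : Matrix m m K} (hM : IsUnit M.det) {k : K}
    (hk : k ≠ 0) (v : m → K) :
    (k • v) ⬝ᵥ ((k • M)⁻¹ *ᵥ (k • v)) = k * (v ⬝ᵥ (M⁻¹ *ᵥ v)) := by
  have := invertibleOfNonzero hk
  rw [inv_smul M k hM, invOf_eq_inv, smul_mulVec, mulVec_smul, smul_dotProduct, dotProduct_smul,
    dotProduct_smul]
  simp only [smul_eq_mul]
  field_simp

lemma det_borderedMatrix (hA : IsUnit A.det) :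
    (borderedMatrix A b c d).det = A.det * (d - c ⬝ᵥ (A⁻¹ *ᵥ b)) := by
  have := A.invertibleOfIsUnitDet hA
  rw [borderedMatrix, det_fromBlocks₁₁, invOf_eq_nonsing_inv, det_unique (n := Unit)]
  congr 1
  rw [Matrix.sub_apply, of_apply, ← replicateRow_vecMul, replicateRow_mul_replicateCol_apply,
    ← dotProduct_mulVec]

lemma sumElim_zero_dotProduct_inv_borderedMatrix_mulVec (hA : IsUnit A.det)
    (hσ : d - c ⬝ᵥ (A⁻¹ *ᵥ b) ≠ 0) (t : K) :
    Sum.elim (0 : m → K) (fun _ => t) ⬝ᵥ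
        ((borderedMatrix A b c d)⁻¹ *ᵥ Sum.elim (0 : m → K) (fun _ => t)) =
      t ^ 2 / (d - c ⬝ᵥ (A⁻¹ *ᵥ b)) := by
  set σ := d - c ⬝ᵥ (A⁻¹ *ᵥ b)
  have hM : IsUnit (borderedMatrix A b c d).det := by
    rw [det_borderedMatrix hA]; exact hA.mul (isUnit_iff_ne_zero.2 hσ)
  have hsol : borderedMatrix A b c d *ᵥ Sum.elim ((-(t / σ)) • (A⁻¹ *ᵥ b)) (fun _ => t / σ) =
      Sum.elim (0 : m → K) (fun _ => t) := by
    rw [borderedMatrix_mulVec, mulVec_smul, mulVec_mulVec, mul_nonsing_inv _ hA, one_mulVec,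
      neg_smul, neg_add_cancel, dotProduct_smul, smul_eq_mul]
    congr 1
    funext
    field_simp
    ring
  rw [← hsol, mulVec_mulVec, nonsing_inv_mul _ hM, one_mulVec, hsol, sumElim_dotProduct_sumElim,
    zero_dotProduct, zero_add]
  simp only [dotProduct, Finset.univ_unique, Finset.sum_singleton]
  field_simp

end Bordered

end Matrix

theorem stmt4_general {n q : ℕ}
    (X : Matrix (Fin n) (Fin q) ℝ) (W : Matrix (Fin n) (Fin n) ℝ)
    (hW : W.PosDef) (hXWX : IsUnit (Xᵀ * W * X).det)
    (φ : ℝ) (hφ : 0 < φ) (z x : Fin n → ℝ) :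
    let Whalf := hW.posSemidef.1.eigenvectorUnitary.1 *
      diagonal ((↑) ∘ (Real.sqrt ∘ hW.posSemidef.1.eigenvalues)) *
      (star hW.posSemidef.1.eigenvectorUnitary : Matrix (Fin n) (Fin n) ℝ)
    let P := Whalf * X * (Xᵀ * W * X)⁻¹ * Xᵀ * Whalf
    let s : Fin n → ℝ := (1 - P) *ᵥ (Whalf *ᵥ x)
    s ≠ 0 →
    let βhat : Fin q → ℝ := (Xᵀ * W * X)⁻¹ *ᵥ (Xᵀ *ᵥ (W *ᵥ z))
    let r : Fin n → ℝ := (1 - P) *ᵥ (Whalf *ᵥ (z - X *ᵥ βhat))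
    let u : (Fin q ⊕ Unit) → ℝ :=
      Sum.elim (fun i => (1 / φ) * ((Xᵀ *ᵥ (W *ᵥ (z - X *ᵥ βhat))) i))
        (fun _ => (1 / φ) * (x ⬝ᵥ (W *ᵥ (z - X *ᵥ βhat))))
    let M : Matrix (Fin q ⊕ Unit) (Fin q ⊕ Unit) ℝ :=
      Matrix.fromBlocks (Xᵀ * W * X) (fun i _ => (Xᵀ *ᵥ (W *ᵥ x)) i)
        (fun _ j => Matrix.vecMul x (W * X) j) (fun _ _ => x ⬝ᵥ (W *ᵥ x))
    IsUnit ((1 / φ) • M).det ∧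
      u ⬝ᵥ (((1 / φ) • M)⁻¹ *ᵥ u) = (r ⬝ᵥ s) ^ 2 / (φ * (s ⬝ᵥ s)) := by
  intro Whalf P s hs βhat r u M
  have hWhalf : Whalf = cfc Real.sqrt W :=
    hW.posSemidef.1.eigenvectorUnitary_mul_diagonal_mul_star Real.sqrt
  have hSt : Whalfᵀ = Whalf := hWhalf ▸ transpose_cfc W Real.sqrt
  have hSS : Whalf * Whalf = W := hWhalf ▸ hW.posSemidef.cfc_sqrt_mul_cfc_sqrt
  have hnormal : Xᵀ *ᵥ (W *ᵥ (z - X *ᵥ βhat)) = 0 :=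
    transpose_mulVec_mulVec_sub_weightedLeastSquares hXWX z
  have hschur : s ⬝ᵥ s = x ⬝ᵥ (W *ᵥ x) -
      (x ᵥ* (W * X)) ⬝ᵥ ((Xᵀ * W * X)⁻¹ *ᵥ (Xᵀ *ᵥ (W *ᵥ x))) :=
    dotProduct_one_sub_weightedHatMatrix_mulVec hSt hSS hXWX x x
  have hrs : r ⬝ᵥ s = x ⬝ᵥ (W *ᵥ (z - X *ᵥ βhat)) := by
    rw [dotProduct_comm]
    refine (dotProduct_one_sub_weightedHatMatrix_mulVec hSt hSS hXWX x _).trans ?_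
    rw [hnormal, mulVec_zero, dotProduct_zero, sub_zero]
  have hu : u = (1 / φ) • Sum.elim (0 : Fin q → ℝ) fun _ => r ⬝ᵥ s := by
    ext (i | _) <;> simp [u, hnormal, hrs]
  have hM : M = borderedMatrix (Xᵀ * W * X) (Xᵀ *ᵥ (W *ᵥ x)) (x ᵥ* (W * X)) (x ⬝ᵥ (W *ᵥ x)) := rfl
  have hss : s ⬝ᵥ s ≠ 0 := fun h => hs (dotProduct_self_eq_zero.1 h)
  have hMdet : IsUnit M.det := by
    rw [hM, det_borderedMatrix hXWX, ← hschur]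
    exact hXWX.mul (isUnit_iff_ne_zero.2 hss)
  refine ⟨?_, ?_⟩
  · rw [det_smul]
    exact (isUnit_iff_ne_zero.2 (by positivity)).mul hMdet
  · rw [hu, smul_dotProduct_inv_smul_mulVec_smul hMdet (by positivity), hM,
      sumElim_zero_dotProduct_inv_borderedMatrix_mulVec hXWX (hschur ▸ hss), ← hschur]
    field_simp

/-- Closed form of the score statistic (Theorem 1 of the paper): with
`β̂ = (XᵀWX)⁻¹XᵀWz`, `r = (I − P)W^{1/2}(z − Xβ̂)`, `s = (I − P)W^{1/2}x ≠ 0`,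
score vector `u = (1/φ)·(XᵀW(z − Xβ̂), xᵀW(z − Xβ̂))` and Fisher information `(1/φ)M`,
the matrix `(1/φ)M` is invertible and `uᵀ((1/φ)M)⁻¹u = ⟨r,s⟩²/(φ‖s‖²)`. -/
theorem stmt4 {n q : ℕ} (hn : 0 < n) (hq : 0 < q)
    (X : Matrix (Fin n) (Fin q) ℝ) (W : Matrix (Fin n) (Fin n) ℝ)
    (hW : W.PosDef) (hXWX : IsUnit (Xᵀ * W * X).det)
    (φ : ℝ) (hφ : 0 < φ) (z x : Fin n → ℝ) :
    let Whalf := hW.posSemidef.1.eigenvectorUnitary.1 *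
      diagonal ((↑) ∘ (Real.sqrt ∘ hW.posSemidef.1.eigenvalues)) *
      (star hW.posSemidef.1.eigenvectorUnitary : Matrix (Fin n) (Fin n) ℝ)
    let P := Whalf * X * (Xᵀ * W * X)⁻¹ * Xᵀ * Whalf
    let s : Fin n → ℝ := (1 - P) *ᵥ (Whalf *ᵥ x)
    s ≠ 0 →
    let βhat : Fin q → ℝ := (Xᵀ * W * X)⁻¹ *ᵥ (Xᵀ *ᵥ (W *ᵥ z))
    let r : Fin n → ℝ := (1 - P) *ᵥ (Whalf *ᵥ (z - X *ᵥ βhat))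
    let u : (Fin q ⊕ Unit) → ℝ :=
      Sum.elim (fun i => (1 / φ) * ((Xᵀ *ᵥ (W *ᵥ (z - X *ᵥ βhat))) i))
        (fun _ => (1 / φ) * (x ⬝ᵥ (W *ᵥ (z - X *ᵥ βhat))))
    let M : Matrix (Fin q ⊕ Unit) (Fin q ⊕ Unit) ℝ :=
      Matrix.fromBlocks (Xᵀ * W * X) (fun i _ => (Xᵀ *ᵥ (W *ᵥ x)) i)
        (fun _ j => Matrix.vecMul x (W * X) j) (fun _ _ => x ⬝ᵥ (W *ᵥ x))
    IsUnit ((1 / φ) • M).det ∧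
      u ⬝ᵥ (((1 / φ) • M)⁻¹ *ᵥ u) = (r ⬝ᵥ s) ^ 2 / (φ * (s ⬝ᵥ s)) :=
  stmt4_general X W hW hXWX φ hφ z x
end

section
/- For every real C > 1, lim_{n→∞} Σ_{r=2}^{n} C^r · exp(−(1/2)·((log n − 1)·r − (r − 1)·log(log n) + log r)) = 0. -/
/-!
With `L = log n`, the `r`-th term equals `(C * √(e * L / n)) ^ r / √(r * L)`. Once `L ≥ 1` it is
therefore at most `ρ ^ r` with `ρ = C * √(e * log n / n) → 0`, and the sum over `r ≥ 2` is bounded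
by the geometric tail `ρ ^ 2 / (1 - ρ)`.
-/

open Filter Finset Real

lemma geom_sum_Icc_two_le_two_mul_sq {q : ℝ} (hq₀ : 0 ≤ q) (hq : q ≤ 1 / 2) (n : ℕ) :
    ∑ r ∈ Icc 2 n, q ^ r ≤ 2 * q ^ 2 :=
  calc ∑ r ∈ Icc 2 n, q ^ r = ∑ r ∈ Ico 2 (n + 1), q ^ r := by rw [Ico_add_one_right_eq_Icc]
    _ ≤ q ^ 2 / (1 - q) := geom_sum_Ico_le_of_lt_one hq₀ (by linarith)
    _ ≤ 2 * q ^ 2 := by rw [div_le_iff₀ (by linarith)]; nlinarith [sq_nonneg q]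

lemma tendsto_sum_Icc_two_of_le_pow {f : ℕ → ℕ → ℝ} {q : ℕ → ℝ}
    (hq : Tendsto q atTop (nhds 0)) (hq₀ : ∀ n, 0 ≤ q n)
    (hf : ∀ᶠ n in atTop, ∀ r ∈ Icc 2 n, 0 ≤ f n r ∧ f n r ≤ q n ^ r) :
    Tendsto (fun n => ∑ r ∈ Icc 2 n, f n r) atTop (nhds 0) := by
  have hsq : Tendsto (fun n => 2 * q n ^ 2) atTop (nhds 0) := by
    simpa using (hq.pow 2).const_mul 2
  have hsmall : ∀ᶠ n in atTop, q n ≤ 1 / 2 := hq.eventually (ge_mem_nhds (by norm_num))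
  refine squeeze_zero' ?_ ?_ hsq
  · filter_upwards [hf] with n hn
    exact sum_nonneg fun r hr => (hn r hr).1
  · filter_upwards [hf, hsmall] with n hn hqn
    exact (sum_le_sum fun r hr => (hn r hr).2).trans
      (geom_sum_Icc_two_le_two_mul_sq (hq₀ n) hqn n)

lemma Real.tendsto_log_sub_self_atBot : Tendsto (fun x => log x - x) atTop atBot := by
  have hratio : Tendsto (fun x => log x / x - 1) atTop (nhds (-1)) := by
    simpa using (tendsto_pow_log_div_mul_add_atTop 1 0 1 one_ne_zero).sub_const 1
  refine (tendsto_id.atTop_mul_neg (by norm_num) hratio).congr' ?_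
  filter_upwards [eventually_gt_atTop 0] with x hx
  simp only [id, mul_sub, mul_div_cancel₀ _ hx.ne', mul_one]

-- `dominatingRatio C L = C * √(e * L / exp L)`, written so that its powers are exponentials.
noncomputable def dominatingRatio (C L : ℝ) : ℝ :=
  exp (log C + (1 + log L - L) / 2)

lemma tendsto_dominatingRatio_atTop (C : ℝ) :
    Tendsto (dominatingRatio C) atTop (nhds 0) := by
  have hexponent : Tendsto (fun L => log C + (1 + log L - L) / 2) atTop atBot := by
    refine (tendsto_atBot_add_const_left _ (log C) ((tendsto_atBot_add_const_left _ 1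
      tendsto_log_sub_self_atBot).atBot_div_const two_pos)).congr fun L => ?_
    rw [add_sub_assoc]
  exact tendsto_exp_atBot.comp hexponent

lemma pow_mul_exp_le_dominatingRatio_pow {C L : ℝ} (hC : 0 < C) (hL : 1 ≤ L)
    {r : ℕ} (hr : 1 ≤ r) :
    C ^ r * exp (-(1 / 2) * ((L - 1) * r - (r - 1) * log L + log r)) ≤
      dominatingRatio C L ^ r := by
  have hlogL : 0 ≤ log L := log_nonneg hL
  have hlogr : 0 ≤ log (r : ℝ) := log_nonneg (by exact_mod_cast hr)
  rw [dominatingRatio, ← exp_nat_mul, ← exp_log (pow_pos hC r), ← exp_add, exp_le_exp,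
    log_pow]
  nlinarith

/-- For every `C > 1`,
`Σ_{r=2}^{n} C^r · exp(−(1/2)·((log n − 1)·r − (r − 1)·log(log n) + log r)) → 0`
as `n → ∞`. -/
theorem stmt15 (C : ℝ) (hC : 1 < C) :
    Tendsto
      (fun n : ℕ => ∑ r ∈ Finset.Icc 2 n,
        C ^ r * Real.exp (-(1 / 2) *
          ((Real.log n - 1) * (r : ℝ) - ((r : ℝ) - 1) * Real.log (Real.log n) +
            Real.log r)))
      atTop (nhds 0) := by
  have hlog : Tendsto (fun n : ℕ => log (n : ℝ)) atTop atTop :=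
    tendsto_log_atTop.comp tendsto_natCast_atTop_atTop
  refine tendsto_sum_Icc_two_of_le_pow ((tendsto_dominatingRatio_atTop C).comp hlog)
    (fun n => (exp_pos _).le) ?_
  filter_upwards [hlog.eventually (eventually_ge_atTop 1)] with n hn r hr
  exact ⟨by positivity, pow_mul_exp_le_dominatingRatio_pow (by linarith) hn
    (one_le_two.trans (mem_Icc.mp hr).1)⟩
end
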